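/- arXiv:0908.3855 — 3 statements merged into one kernel-verified Lean document; each statement's English description precedes it below -/
import Mathlib

section
/- Let ξ₀ > 0 and let φ : ℝ → ℂ be integrable with Fourier transform vanishing outside the open interval (−ξ₀, ξ₀), i.e. 𝓕φ(ξ) = 0 whenever |ξ| ≥ ξ₀. Then for every ξ ∈ ℝ, 𝓕(x ↦ φ(x)·sin(2π ξ₀ x))(ξ) = −i·sign(ξ)·𝓕(x ↦ φ(x)·cos(2π ξ₀ x))(ξ). In other words, the Hilbert transform of the bandlimited windowed cosine φ(x)cos(2π ξ₀ x) is the windowed sine φ(x)sin(2π ξ₀ x): the Hilbert transform shifts the phase of the modulating sinusoid while preserving the window. -/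
/-! Writing `cos θ = (e^{iθ} + e^{-iθ})/2` and `sin θ = -i (e^{iθ} - e^{-iθ})/2`, the Fourier
transforms of `φ cos(2π ξ₀ ·)` and `φ sin(2π ξ₀ ·)` at `ξ` are combinations of the shifted
transforms `𝓕φ(ξ - ξ₀)` and `𝓕φ(ξ + ξ₀)`. Since `𝓕φ` is supported in `(-ξ₀, ξ₀)`, for `ξ > 0`
only `𝓕φ(ξ - ξ₀)` survives and for `ξ < 0` only `𝓕φ(ξ + ξ₀)`, which produces the factor
`-i sign ξ`; at `ξ = 0` both vanish. -/

open MeasureTheory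
open scoped FourierTransform Real

namespace Real

open scoped RealInnerProductSpace

variable {V E : Type*} [NormedAddCommGroup V] [InnerProductSpace ℝ V] [FiniteDimensional ℝ V]
  [MeasurableSpace V] [BorelSpace V] [NormedAddCommGroup E] [NormedSpace ℂ E]

theorem fourier_fourierChar_smul (f : V → E) (a w : V) :
    𝓕 (fun v ↦ 𝐞 ⟪v, a⟫ • f v) w = 𝓕 f (w - a) := by
  simp only [fourier_eq, smul_smul, ← AddChar.map_add_eq_mul, inner_sub_right, neg_sub',
    sub_neg_eq_add]

theorem fourier_add_of_integrable {f g : V → E} (hf : Integrable f) (hg : Integrable g) :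
    𝓕 (f + g) = 𝓕 f + 𝓕 g :=
  VectorFourier.fourierIntegral_add continuous_fourierChar
    (innerSL ℝ (E := V)).continuous₂ hf hg

theorem fourier_const_smul (c : ℂ) (f : V → E) : 𝓕 (c • f) = c • 𝓕 f :=
  VectorFourier.fourierIntegral_const_smul _ _ _ f c

theorem integrable_fourierChar_smul {f : V → E} (hf : Integrable f) (a : V) :
    Integrable (fun v ↦ 𝐞 ⟪v, a⟫ • f v) := by
  simpa using (fourierIntegral_convergent_iff (-a)).2 hf

theorem fourier_fourierChar_combination {f : V → E} (hf : Integrable f) (c d : ℂ) (a w : V) :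
    𝓕 (fun v ↦ (c * 𝐞 ⟪v, a⟫ + d * 𝐞 (-⟪v, a⟫)) • f v) w =
      c • 𝓕 f (w - a) + d • 𝓕 f (w + a) := by
  have hsplit : (fun v ↦ (c * 𝐞 ⟪v, a⟫ + d * 𝐞 (-⟪v, a⟫)) • f v) =
      c • (fun v ↦ 𝐞 ⟪v, a⟫ • f v) + d • fun v ↦ 𝐞 ⟪v, -a⟫ • f v := by
    ext v
    simp only [Pi.add_apply, Pi.smul_apply, add_smul, mul_smul, Circle.smul_def, inner_neg_right]
  rw [hsplit, fourier_add_of_integrable ((integrable_fourierChar_smul hf a).smul c)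
    ((integrable_fourierChar_smul hf (-a)).smul d), fourier_const_smul, fourier_const_smul]
  simp only [Pi.add_apply, Pi.smul_apply, fourier_fourierChar_smul, sub_neg_eq_add]

theorem fourier_mul_cos {f : ℝ → ℂ} (hf : Integrable f) (a ξ : ℝ) :
    𝓕 (fun x ↦ f x * (cos (2 * π * a * x) : ℂ)) ξ = (𝓕 f (ξ - a) + 𝓕 f (ξ + a)) / 2 := by
  have hcos : (fun x ↦ f x * (cos (2 * π * a * x) : ℂ)) =
      fun x ↦ ((1 / 2 : ℂ) * 𝐞 ⟪x, a⟫ + (1 / 2 : ℂ) * 𝐞 (-⟪x, a⟫)) • f x := by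
    ext x
    simp only [fourierChar_apply, inner_apply, smul_eq_mul, Complex.ofReal_cos]
    push_cast
    linear_combination (norm := ring_nf) (f x / 2) * Complex.two_cos (2 * π * a * x)
  rw [hcos, fourier_fourierChar_combination hf, smul_eq_mul, smul_eq_mul]
  ring

theorem fourier_mul_sin {f : ℝ → ℂ} (hf : Integrable f) (a ξ : ℝ) :
    𝓕 (fun x ↦ f x * (sin (2 * π * a * x) : ℂ)) ξ =
      -Complex.I * (𝓕 f (ξ - a) - 𝓕 f (ξ + a)) / 2 := by
  have hsin : (fun x ↦ f x * (sin (2 * π * a * x) : ℂ)) =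
      fun x ↦ (-Complex.I / 2 * 𝐞 ⟪x, a⟫ + Complex.I / 2 * 𝐞 (-⟪x, a⟫)) • f x := by
    ext x
    simp only [fourierChar_apply, inner_apply, smul_eq_mul, Complex.ofReal_sin]
    push_cast
    linear_combination (norm := ring_nf) (f x / 2) * Complex.two_sin (2 * π * a * x)
  rw [hsin, fourier_fourierChar_combination hf, smul_eq_mul, smul_eq_mul]
  ring

end Real

theorem sub_eq_sign_mul_add_of_bandlimited {F : ℝ → ℂ} {ξ₀ : ℝ}
    (hband : ∀ ξ : ℝ, ξ₀ ≤ |ξ| → F ξ = 0) (ξ : ℝ) :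
    F (ξ - ξ₀) - F (ξ + ξ₀) = Real.sign ξ * (F (ξ - ξ₀) + F (ξ + ξ₀)) := by
  have hlow : ξ ≤ 0 → F (ξ - ξ₀) = 0 := fun h ↦ hband _ (le_abs.2 (Or.inr (by linarith)))
  have hhigh : 0 ≤ ξ → F (ξ + ξ₀) = 0 := fun h ↦ hband _ (le_abs.2 (Or.inl (by linarith)))
  rcases lt_trichotomy ξ 0 with hneg | rfl | hpos
  · rw [hlow hneg.le, Real.sign_of_neg hneg]
    push_cast
    ring
  · rw [hlow le_rfl, hhigh le_rfl, Real.sign_zero]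
    simp
  · rw [hhigh hpos.le, Real.sign_of_pos hpos]
    push_cast
    ring

theorem hilbert_of_bandlimited_windowed_cosine_general
    (ξ₀ : ℝ) (φ : ℝ → ℂ) (hφ : Integrable φ)
    (hband : ∀ ξ : ℝ, ξ₀ ≤ |ξ| → 𝓕 φ ξ = 0) :
    ∀ ξ : ℝ,
      𝓕 (fun x : ℝ => φ x * (Real.sin (2 * π * ξ₀ * x) : ℂ)) ξ =
        -Complex.I * (Real.sign ξ : ℂ) *
          𝓕 (fun x : ℝ => φ x * (Real.cos (2 * π * ξ₀ * x) : ℂ)) ξ := by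
  intro ξ
  rw [Real.fourier_mul_sin hφ, Real.fourier_mul_cos hφ,
    sub_eq_sign_mul_add_of_bandlimited hband]
  ring

/-- The Hilbert transform of a bandlimited windowed cosine `φ(x) cos(2π ξ₀ x)` is the
windowed sine `φ(x) sin(2π ξ₀ x)`. -/
theorem hilbert_of_bandlimited_windowed_cosine
    (ξ₀ : ℝ) (hξ₀ : 0 < ξ₀) (φ : ℝ → ℂ) (hφ : Integrable φ)
    (hband : ∀ ξ : ℝ, ξ₀ ≤ |ξ| → 𝓕 φ ξ = 0) :
    ∀ ξ : ℝ,
      𝓕 (fun x : ℝ => φ x * (Real.sin (2 * π * ξ₀ * x) : ℂ)) ξ =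
        -Complex.I * (Real.sign ξ : ℂ) *
          𝓕 (fun x : ℝ => φ x * (Real.cos (2 * π * ξ₀ * x) : ℂ)) ξ :=
  hilbert_of_bandlimited_windowed_cosine_general ξ₀ φ hφ hband
end

section
/- (Directional quadrature relation for the diagonal complex wavelet Ψ₅, oriented along θ = π/4.) Let ψ, ψ' : ℝ → ℂ be integrable functions with 𝓕ψ'(ξ) = −i·sign(ξ)·𝓕ψ(ξ) for all ξ ∈ ℝ. Define on ℝ² the functions A(x, y) = (ψ(x)ψ(y) − ψ'(x)ψ'(y))/√2 and B(x, y) = (ψ(x)ψ'(y) + ψ'(x)ψ(y))/√2. Then for every ω = (ω₁, ω₂) ∈ ℝ², 𝓕B(ω) = −i·sign(ω₁ + ω₂)·𝓕A(ω); that is, B is the directional Hilbert transform of A along the diagonal direction u = (1/√2, 1/√2), so Ψ₅ = A + iB is a direction-selective complex wavelet oriented along θ₅ = π/4. -/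
open MeasureTheory
open scoped FourierTransform Real

/-!
Both functions are combinations of tensor products `a(x) b(y)`, whose Fourier transform is
`𝓕a(ω₁) 𝓕b(ω₂)`. Writing `sᵢ = sign ωᵢ` and `P = 𝓕ψ(ω₁) 𝓕ψ(ω₂)`, the hypothesis gives
`√2 𝓕B(ω) = -i (s₁ + s₂) P` and `√2 𝓕A(ω) = (1 + s₁ s₂) P`, and
`s₁ + s₂ = sign(ω₁ + ω₂) (1 + s₁ s₂)`: both sides vanish when the signs are opposite.
-/

section Linearity

variable {V E : Type*} [NormedAddCommGroup V] [InnerProductSpace ℝ V] [FiniteDimensional ℝ V]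
  [MeasurableSpace V] [BorelSpace V] [NormedAddCommGroup E] [NormedSpace ℂ E]

theorem fourier_add_of_integrable {f g : V → E} (hf : Integrable f) (hg : Integrable g) :
    𝓕 (f + g) = 𝓕 f + 𝓕 g := by
  ext w
  simp only [Real.fourier_eq, Pi.add_apply, smul_add]
  exact integral_add ((Real.fourierIntegral_convergent_iff w).2 hf)
    ((Real.fourierIntegral_convergent_iff w).2 hg)

theorem fourier_sub_of_integrable {f g : V → E} (hf : Integrable f) (hg : Integrable g) :
    𝓕 (f - g) = 𝓕 f - 𝓕 g := by
  ext w
  simp only [Real.fourier_eq, Pi.sub_apply, smul_sub]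
  exact integral_sub ((Real.fourierIntegral_convergent_iff w).2 hf)
    ((Real.fourierIntegral_convergent_iff w).2 hg)

theorem fourier_const_smul (c : ℂ) (f : V → E) : 𝓕 (c • f) = c • 𝓕 f :=
  VectorFourier.fourierIntegral_const_smul _ _ _ f c

end Linearity

section Tensor

variable {ι : Type*} [Fintype ι]

theorem integrable_euclideanSpace_prod {f : ι → ℝ → ℂ} (hf : ∀ i, Integrable (f i)) :
    Integrable (fun x : EuclideanSpace ℝ ι => ∏ i, f i (x i)) := by
  rw [← (PiLp.volume_preserving_toLp ι).integrable_comp_emb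
    (MeasurableEquiv.toLp 2 _).measurableEmbedding]
  exact Integrable.fintype_prod hf

theorem fourier_euclideanSpace_prod (f : ι → ℝ → ℂ) (ω : EuclideanSpace ℝ ι) :
    𝓕 (fun x : EuclideanSpace ℝ ι => ∏ i, f i (x i)) ω = ∏ i, 𝓕 (f i) (ω i) := by
  simp only [Real.fourier_eq]
  rw [← (PiLp.volume_preserving_toLp ι).integral_comp
    (MeasurableEquiv.toLp 2 _).measurableEmbedding, ← integral_fintype_prod_volume_eq_prod]
  congr with x
  simp only [PiLp.inner_apply, Circle.smul_def, Real.fourierChar_apply, smul_eq_mul,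
    Finset.prod_mul_distrib, RCLike.inner_apply, conj_trivial]
  push_cast
  rw [← Complex.exp_sum]
  congr 2
  simp [Finset.mul_sum, mul_comm]

end Tensor

theorem fourier_mul_finTwo (a b : ℝ → ℂ) (ω : EuclideanSpace ℝ (Fin 2)) :
    𝓕 (fun x : EuclideanSpace ℝ (Fin 2) => a (x 0) * b (x 1)) ω = 𝓕 a (ω 0) * 𝓕 b (ω 1) := by
  simpa using fourier_euclideanSpace_prod ![a, b] ω

theorem integrable_mul_finTwo {a b : ℝ → ℂ} (ha : Integrable a) (hb : Integrable b) :
    Integrable (fun x : EuclideanSpace ℝ (Fin 2) => a (x 0) * b (x 1)) := by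
  simpa using integrable_euclideanSpace_prod (f := ![a, b]) (by simp [Fin.forall_fin_two, ha, hb])

theorem Real.sign_add_sign (x y : ℝ) :
    sign x + sign y = sign (x + y) * (1 + sign x * sign y) := by
  rcases lt_trichotomy x 0 with hx | rfl | hx <;> rcases lt_trichotomy y 0 with hy | rfl | hy <;>
    simp [sign_of_neg, sign_of_pos, add_neg, add_pos, *]

/-- Directional quadrature relation for the diagonal complex wavelet `Ψ₅`:
if `ψ' = 𝗛ψ`, then `B(x,y) = (ψ(x)ψ'(y) + ψ'(x)ψ(y))/√2` is the directional Hilbert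
transform of `A(x,y) = (ψ(x)ψ(y) - ψ'(x)ψ'(y))/√2` along the diagonal `u = (1/√2, 1/√2)`. -/
theorem directional_quadrature_diagonal
    (ψ ψ' : ℝ → ℂ) (hψ : Integrable ψ) (hψ' : Integrable ψ')
    (hH : ∀ ξ : ℝ, 𝓕 ψ' ξ = -Complex.I * (Real.sign ξ : ℂ) * 𝓕 ψ ξ) :
    ∀ ω : EuclideanSpace ℝ (Fin 2),
      𝓕 (fun x : EuclideanSpace ℝ (Fin 2) =>
          (ψ (x 0) * ψ' (x 1) + ψ' (x 0) * ψ (x 1)) / (Real.sqrt 2 : ℂ)) ω =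
        -Complex.I * (Real.sign (ω 0 + ω 1) : ℂ) *
          𝓕 (fun x : EuclideanSpace ℝ (Fin 2) =>
              (ψ (x 0) * ψ (x 1) - ψ' (x 0) * ψ' (x 1)) / (Real.sqrt 2 : ℂ)) ω := by
  intro ω
  have hB : (fun x : EuclideanSpace ℝ (Fin 2) =>
      (ψ (x 0) * ψ' (x 1) + ψ' (x 0) * ψ (x 1)) / (Real.sqrt 2 : ℂ)) =
      (Real.sqrt 2 : ℂ)⁻¹ • ((fun x : EuclideanSpace ℝ (Fin 2) => ψ (x 0) * ψ' (x 1)) +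
        fun x => ψ' (x 0) * ψ (x 1)) := by
    ext x; simp [div_eq_inv_mul]
  have hA : (fun x : EuclideanSpace ℝ (Fin 2) =>
      (ψ (x 0) * ψ (x 1) - ψ' (x 0) * ψ' (x 1)) / (Real.sqrt 2 : ℂ)) =
      (Real.sqrt 2 : ℂ)⁻¹ • ((fun x : EuclideanSpace ℝ (Fin 2) => ψ (x 0) * ψ (x 1)) -
        fun x => ψ' (x 0) * ψ' (x 1)) := by
    ext x; simp [div_eq_inv_mul]
  rw [hB, hA, fourier_const_smul, fourier_const_smul,
    fourier_add_of_integrable (integrable_mul_finTwo hψ hψ') (integrable_mul_finTwo hψ' hψ),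
    fourier_sub_of_integrable (integrable_mul_finTwo hψ hψ) (integrable_mul_finTwo hψ' hψ')]
  simp only [Pi.smul_apply, Pi.add_apply, Pi.sub_apply, fourier_mul_finTwo, hH, smul_eq_mul]
  have hsign := congrArg ((↑) : ℝ → ℂ) (Real.sign_add_sign (ω 0) (ω 1))
  push_cast at hsign
  linear_combination (-Complex.I * (Real.sqrt 2 : ℂ)⁻¹ * 𝓕 ψ (ω 0) * 𝓕 ψ (ω 1)) * hsign +
    (-Complex.I * (Real.sqrt 2 : ℂ)⁻¹ * 𝓕 ψ (ω 0) * 𝓕 ψ (ω 1) * (Real.sign (ω 0 + ω 1) : ℂ) *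
      (Real.sign (ω 0) : ℂ) * (Real.sign (ω 1) : ℂ)) * Complex.I_sq
end

section
/- (Directional quadrature relation for the anti-diagonal complex wavelet Ψ₆, oriented along θ = 3π/4.) Let ψ, ψ' : ℝ → ℂ be integrable functions with 𝓕ψ'(ξ) = −i·sign(ξ)·𝓕ψ(ξ) for all ξ ∈ ℝ. Define on ℝ² the functions A(x, y) = (ψ(x)ψ(y) + ψ'(x)ψ'(y))/√2 and B(x, y) = (ψ(x)ψ'(y) − ψ'(x)ψ(y))/√2. Then for every ω = (ω₁, ω₂) ∈ ℝ², 𝓕B(ω) = −i·sign(ω₂ − ω₁)·𝓕A(ω); that is, B is the directional Hilbert transform of A along the anti-diagonal direction u = (−1/√2, 1/√2), so Ψ₆ = A + iB is a direction-selective complex wavelet oriented along θ₆ = 3π/4. -/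
open MeasureTheory
open scoped FourierTransform Real RealInnerProductSpace

/-! By Fubini, the Fourier transform of `a(x)b(y)` is `𝓕a(ω₁)𝓕b(ω₂)`. Writing `sⱼ = sign ωⱼ` and
`P = 𝓕ψ(ω₁)𝓕ψ(ω₂)`, the hypothesis gives `𝓕B = -i(s₂ - s₁)P/√2` and `𝓕A = (1 - s₁s₂)P/√2`, so
everything reduces to the sign identity `s₂ - s₁ = sign(ω₂ - ω₁)(1 - s₁s₂)`. -/

theorem Real.sign_sub_sign (a b : ℝ) :
    sign b - sign a = sign (b - a) * (1 - sign a * sign b) := by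
  rcases lt_trichotomy a 0 with ha | ha | ha <;> rcases lt_trichotomy b 0 with hb | hb | hb <;>
    rcases lt_trichotomy (b - a) 0 with h | h | h <;>
    simp [sign_of_neg, sign_of_pos, ha, hb, h] <;> linarith

section Linearity

variable {V E : Type*} [NormedAddCommGroup V] [InnerProductSpace ℝ V] [MeasurableSpace V]
  [BorelSpace V] [FiniteDimensional ℝ V] [NormedAddCommGroup E] [NormedSpace ℂ E]
  {f g : V → E}

theorem Real.fourier_add_apply (hf : Integrable f) (hg : Integrable g) (w : V) :
    𝓕 (fun v ↦ f v + g v) w = 𝓕 f w + 𝓕 g w := by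
  simp only [Real.fourier_eq, smul_add]
  exact integral_add ((Real.fourierIntegral_convergent_iff w).2 hf)
    ((Real.fourierIntegral_convergent_iff w).2 hg)

theorem Real.fourier_sub_apply (hf : Integrable f) (hg : Integrable g) (w : V) :
    𝓕 (fun v ↦ f v - g v) w = 𝓕 f w - 𝓕 g w := by
  simp only [Real.fourier_eq, smul_sub]
  exact integral_sub ((Real.fourierIntegral_convergent_iff w).2 hf)
    ((Real.fourierIntegral_convergent_iff w).2 hg)

theorem Real.fourier_div_const_apply (f : V → ℂ) (c : ℂ) (w : V) :
    𝓕 (fun v ↦ f v / c) w = 𝓕 f w / c := by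
  simp only [Real.fourier_eq, Circle.smul_def, smul_eq_mul, ← mul_div_assoc, integral_div]

end Linearity

namespace EuclideanSpace

noncomputable def measurableEquivProdFinTwo : EuclideanSpace ℝ (Fin 2) ≃ᵐ ℝ × ℝ :=
  (MeasurableEquiv.toLp 2 (Fin 2 → ℝ)).symm.trans MeasurableEquiv.finTwoArrow

theorem volume_preserving_measurableEquivProdFinTwo :
    MeasurePreserving measurableEquivProdFinTwo volume volume :=
  (volume_preserving_finTwoArrow ℝ).comp (volume_preserving_symm_measurableEquiv_toLp (Fin 2))

theorem integrable_mul_apply_zero_apply_one {a b : ℝ → ℂ} (ha : Integrable a)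
    (hb : Integrable b) : Integrable fun x : EuclideanSpace ℝ (Fin 2) ↦ a (x 0) * b (x 1) :=
  (volume_preserving_measurableEquivProdFinTwo.integrable_comp_emb
    measurableEquivProdFinTwo.measurableEmbedding).2 (ha.mul_prod hb)

theorem fourier_mul_apply_zero_apply_one (a b : ℝ → ℂ) (ω : EuclideanSpace ℝ (Fin 2)) :
    𝓕 (fun x : EuclideanSpace ℝ (Fin 2) ↦ a (x 0) * b (x 1)) ω = 𝓕 a (ω 0) * 𝓕 b (ω 1) := by
  rw [Real.fourier_eq, ← volume_preserving_measurableEquivProdFinTwo.symm.integral_comp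
    measurableEquivProdFinTwo.symm.measurableEmbedding, Real.fourier_real_eq,
    Real.fourier_real_eq, ← integral_prod_mul]
  congr 1 with p
  have hinner : ⟪measurableEquivProdFinTwo.symm p, ω⟫ = p.1 * ω 0 + p.2 * ω 1 := by
    simp [PiLp.inner_apply, Fin.sum_univ_two, measurableEquivProdFinTwo, mul_comm]
  simp only [hinner, neg_add, AddChar.map_add_eq_mul, Circle.smul_def, Circle.coe_mul, smul_eq_mul]
  change _ * (a p.1 * b p.2) = _
  ring

end EuclideanSpace

/-- Directional quadrature relation for the anti-diagonal complex wavelet `Ψ₆`: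
if `ψ' = 𝗛ψ`, then `B(x,y) = (ψ(x)ψ'(y) - ψ'(x)ψ(y))/√2` is the directional Hilbert
transform of `A(x,y) = (ψ(x)ψ(y) + ψ'(x)ψ'(y))/√2` along the anti-diagonal
`u = (-1/√2, 1/√2)`. -/
theorem directional_quadrature_antidiagonal
    (ψ ψ' : ℝ → ℂ) (hψ : Integrable ψ) (hψ' : Integrable ψ')
    (hH : ∀ ξ : ℝ, 𝓕 ψ' ξ = -Complex.I * (Real.sign ξ : ℂ) * 𝓕 ψ ξ) :
    ∀ ω : EuclideanSpace ℝ (Fin 2),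
      𝓕 (fun x : EuclideanSpace ℝ (Fin 2) =>
          (ψ (x 0) * ψ' (x 1) - ψ' (x 0) * ψ (x 1)) / (Real.sqrt 2 : ℂ)) ω =
        -Complex.I * (Real.sign (ω 1 - ω 0) : ℂ) *
          𝓕 (fun x : EuclideanSpace ℝ (Fin 2) =>
              (ψ (x 0) * ψ (x 1) + ψ' (x 0) * ψ' (x 1)) / (Real.sqrt 2 : ℂ)) ω := by
  intro ω
  have hsep := @EuclideanSpace.integrable_mul_apply_zero_apply_one
  rw [Real.fourier_div_const_apply, Real.fourier_div_const_apply,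
    Real.fourier_sub_apply (hsep hψ hψ') (hsep hψ' hψ),
    Real.fourier_add_apply (hsep hψ hψ) (hsep hψ' hψ')]
  simp only [EuclideanSpace.fourier_mul_apply_zero_apply_one, hH]
  have hsign : (Real.sign (ω 1) - Real.sign (ω 0) : ℂ) =
      Real.sign (ω 1 - ω 0) * (1 - Real.sign (ω 0) * Real.sign (ω 1)) := by
    exact_mod_cast Real.sign_sub_sign (ω 0) (ω 1)
  linear_combination (-Complex.I * 𝓕 ψ (ω 0) * 𝓕 ψ (ω 1) / (Real.sqrt 2 : ℂ)) * hsign +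
    (Complex.I * 𝓕 ψ (ω 0) * 𝓕 ψ (ω 1) * Real.sign (ω 1 - ω 0) * Real.sign (ω 0) *
      Real.sign (ω 1) / (Real.sqrt 2 : ℂ)) * Complex.I_mul_I
end
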